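/- Let f be a Boolean network whose influence graph is acyclic. Then f has exactly one fixed point. -/

import Mathlib

/-- A rule of a ground normal logic program. -/
structure Rule (V : Type*) where
  head : V
  pbody : Finset V
  nbody : Finset V
deriving DecidableEq

variable {V : Type*} [DecidableEq V] [Fintype V]

/-- The body formula of a rule holds in state `x`. -/
def bodySat (r : Rule V) (x : V → Bool) : Prop :=
  (∀ p ∈ r.pbody, x p = true) ∧ (∀ p ∈ r.nbody, x p = false)

instance (r : Rule V) (x : V → Bool) : Decidable (bodySat r x) := by
  unfold bodySat; infer_instance

/-- The Boolean network encoding of a logic program. -/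
def enc (P : Finset (Rule V)) (v : V) (x : V → Bool) : Bool :=
  decide (∃ r ∈ P, r.head = v ∧ bodySat r x)

/-- Positive arc of the dependence graph. -/
def posDG (P : Finset (Rule V)) (u v : V) : Prop :=
  ∃ r ∈ P, r.head = v ∧ u ∈ r.pbody

/-- Negative arc of the dependence graph. -/
def negDG (P : Finset (Rule V)) (u v : V) : Prop :=
  ∃ r ∈ P, r.head = v ∧ u ∈ r.nbody

/-- Positive arc of the influence graph of a Boolean network. -/
def posIG (f : V → (V → Bool) → Bool) (u v : V) : Prop :=
  ∃ x : V → Bool, f v (Function.update x u false) = false ∧ f v (Function.update x u true) = true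

/-- Negative arc of the influence graph of a Boolean network. -/
def negIG (f : V → (V → Bool) → Bool) (u v : V) : Prop :=
  ∃ x : V → Bool, f v (Function.update x u false) = true ∧ f v (Function.update x u true) = false

/-- `y` is a Herbrand model of the reduct of `P` with respect to `x`. -/
def modelsReduct (P : Finset (Rule V)) (x y : V → Bool) : Prop :=
  ∀ r ∈ P, (∀ p ∈ r.nbody, x p = false) → (∀ p ∈ r.pbody, y p = true) → y r.head = true

/-- `x` is a stable model of `P`: it is the least Herbrand model of the reduct `P^x`. -/
def isStable (P : Finset (Rule V)) (x : V → Bool) : Prop :=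
  modelsReduct P x x ∧ ∀ y : V → Bool, modelsReduct P x y → ∀ v, x v = true → y v = true

/-- Signed directed walks: `SWalk pos neg u v s n` means there is a directed walk of
length `n` from `u` to `v` whose parity of negative arcs is `s` (`true` = odd). -/
inductive SWalk {V : Type*} (pos neg : V → V → Prop) : V → V → Bool → ℕ → Prop where
  | nil (u : V) : SWalk pos neg u u false 0
  | consPos {u v w : V} {s : Bool} {n : ℕ} :
      pos u v → SWalk pos neg v w s n → SWalk pos neg u w s (n + 1)
  | consNeg {u v w : V} {s : Bool} {n : ℕ} :
      neg u v → SWalk pos neg v w s n → SWalk pos neg u w (!s) (n + 1)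

/-- Unsigned arc of the influence graph of a Boolean network. -/
def arcIG {V : Type*} [DecidableEq V] (f : V → (V → Bool) → Bool) (u v : V) : Prop :=
  ∃ x : V → Bool, f v (Function.update x u false) ≠ f v (Function.update x u true)

lemma noArc_update {V : Type*} [DecidableEq V] (f : V → (V → Bool) → Bool) {u v : V}
    (h : ¬ arcIG f u v) (x : V → Bool) (b : Bool) :
    f v (Function.update x u b) = f v x := by
  unfold arcIG at h
  push_neg at h
  have key : f v (Function.update x u false) = f v (Function.update x u true) := h x
  cases hb : x u
  · cases b
    · rw [← hb, Function.update_eq_self]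
    · rw [← key, ← hb, Function.update_eq_self]
  · cases b
    · rw [key, ← hb, Function.update_eq_self]
    · rw [← hb, Function.update_eq_self]

lemma agree_eval {V : Type*} [DecidableEq V] [Fintype V] (f : V → (V → Bool) → Bool)
    (v : V) (x y : V → Bool)
    (hxy : ∀ u, arcIG f u v → x u = y u) : f v x = f v y := by
  have H : ∀ (s : Finset V), ∀ x y : V → Bool,
      (∀ u, arcIG f u v → x u = y u) → (∀ u, u ∉ s → x u = y u) → f v x = f v y := by
    intro s
    induction s using Finset.induction_on with
    | empty =>
      intro x y _ h
      have : x = y := funext fun u => h u (by simp)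
      rw [this]
    | @insert a s ha ih =>
      intro x y hxy h
      by_cases harc : arcIG f a v
      · apply ih x y hxy
        intro u hu
        by_cases hua : u = a
        · subst hua; exact hxy u harc
        · exact h u (by simp [hua, hu])
      · have h1 : f v (Function.update x a (y a)) = f v x := noArc_update f harc x (y a)
        rw [← h1]
        apply ih _ y
        · intro u hu
          by_cases hua : u = a
          · subst hua; simp
          · rw [Function.update_of_ne hua]; exact hxy u hu
        · intro u hu
          by_cases hua : u = a
          · subst hua; simp
          · rw [Function.update_of_ne hua]; exact h u (by simp [hua, hu])
  exact H Finset.univ x y hxy (fun u hu => absurd (Finset.mem_univ u) hu)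

lemma transGen_swalk {V : Type*} {pos : V → V → Prop} {u v : V}
    (h : Relation.TransGen pos u v) :
    ∃ n, n ≠ 0 ∧ SWalk pos (fun _ _ => False) u v false n := by
  induction h using Relation.TransGen.head_induction_on with
  | single h => exact ⟨1, one_ne_zero, SWalk.consPos h (SWalk.nil _)⟩
  | head h _ ih => obtain ⟨n, hn, w⟩ := ih; exact ⟨n + 1, Nat.succ_ne_zero _, SWalk.consPos h w⟩

/-- a Boolean network whose influence graph is acyclic has exactly one
fixed point. -/
theorem stmt13 {V : Type*} [DecidableEq V] [Fintype V] (f : V → (V → Bool) → Bool)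
    (hacyclic : ∀ (u : V) (n : ℕ), n ≠ 0 → ∀ s : Bool,
      ¬ SWalk (arcIG f) (fun _ _ => False) u u s n) :
    ∃! x : V → Bool, ∀ v : V, f v x = x v := by
  have irr : ∀ u, ¬ Relation.TransGen (arcIG f) u u := by
    intro u hu
    obtain ⟨n, hn, w⟩ := transGen_swalk hu
    exact hacyclic u n hn false w
  haveI : IsIrrefl V (Relation.TransGen (arcIG f)) := ⟨irr⟩
  have hwf : WellFounded (Relation.TransGen (arcIG f)) :=
    Finite.wellFounded_of_trans_of_irrefl _
  classical
  let g : V → Bool := hwf.fix (fun v rec =>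
    f v (fun u => if h : Relation.TransGen (arcIG f) u v then rec u h else false))
  have hg : ∀ v, g v =
      f v (fun u => if h : Relation.TransGen (arcIG f) u v then g u else false) :=
    fun v => hwf.fix_eq _ v
  have hfix : ∀ v, f v g = g v := by
    intro v
    rw [hg v]
    apply agree_eval
    intro u harc
    rw [dif_pos (Relation.TransGen.single harc)]
  refine ⟨g, hfix, ?_⟩
  intro y hy
  funext v
  induction v using hwf.induction with
  | _ v ih =>
    rw [← hy v, ← hfix v]
    apply agree_eval
    intro u harc
    exact ih u (Relation.TransGen.single harc)
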